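/- arXiv:1511.03465 — 4 statements merged into one kernel-verified Lean document; each statement's English description precedes it below -/
import Mathlib

section
/- Let p ≠ q be primes. The image of ℚ[x] in C(ℤ_q, ℤ_p) (each polynomial f ∈ ℚ[x] ∩ Int(ℤ_q, ℤ_p)-valued viewed as a function on ℤ_q with values in ℤ_p, when defined) is not dense in C(ℤ_q, ℤ_p) for the uniform convergence topology. In particular, the characteristic function of qℤ_q (as a map ℤ_q → ℤ_p) cannot be uniformly approximated modulo pℤ_p by any polynomial with rational coefficients. -/
/-!
Each `p^k` is a unit of `ℤ_q`, while `p^k → 0` in `ℚ_p`. So a rational polynomial `f` within `1` of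
the characteristic function of `qℤ_q` has `|f(p^k)|_p < 1` for all `k`, hence `|f(0)|_p < 1` by
continuity (the open unit ball of `ℚ_p` is closed); with `|f(0) - 1|_p < 1` this contradicts the
ultrametric inequality. Since balls of `ℤ_q` are clopen, that characteristic function is continuous,
and it stays at distance `≥ 1` from every polynomial function.
-/

open Filter Topology

section Ultrametric

variable {R : Type*} [NormedRing R] [IsUltrametricDist R]

lemma norm_sub_one_eq_one_of_norm_lt_one [NormOneClass R] {a : R} (ha : ‖a‖ < 1) :
    ‖a - 1‖ = 1 := by
  rw [sub_eq_add_neg, IsUltrametricDist.norm_add_eq_max_of_norm_ne_norm (by simpa using ha.ne),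
    norm_neg, norm_one, max_eq_right ha.le]

lemma norm_apply_zero_lt_of_forall_norm_apply_pow_lt {g : R → R} (hg : Continuous g) {π : R}
    (hπ : ‖π‖ < 1) {r : ℝ} (h : ∀ k : ℕ, ‖g (π ^ k)‖ < r) : ‖g 0‖ < r := by
  have hlim : Tendsto (fun k : ℕ => g (π ^ k)) atTop (𝓝 (g 0)) :=
    (hg.tendsto 0).comp (tendsto_pow_atTop_nhds_zero_of_norm_lt_one hπ)
  simpa using (IsUltrametricDist.isClosed_ball (0 : R) r).mem_of_tendsto hlim
    (Eventually.of_forall fun k => by simpa using h k)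

end Ultrametric

lemma Padic.norm_natCast_eq_one_of_prime_ne {p q : ℕ} [Fact p.Prime] [Fact q.Prime]
    (hpq : p ≠ q) : ‖(p : ℚ_[q])‖ = 1 :=
  Padic.norm_natCast_eq_one_iff.mpr ((Nat.coprime_primes Fact.out Fact.out).mpr hpq.symm)

lemma not_forall_norm_aeval_sub_indicator_lt_one (p q : ℕ) [Fact p.Prime] [Fact q.Prime]
    (hpq : p ≠ q) (f : Polynomial ℚ) :
    ¬ ∀ x : ℚ, ‖(x : ℚ_[q])‖ ≤ 1 →
        ‖(Polynomial.aeval ((x : ℚ) : ℚ_[p])) f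
            - (if ‖(x : ℚ_[q])‖ < 1 then 1 else 0)‖ < 1 := by
  intro hf
  have hpow (k : ℕ) : ‖(Polynomial.aeval ((p : ℚ_[p]) ^ k)) f‖ < 1 := by
    have hunit : ‖(((p : ℚ) ^ k : ℚ) : ℚ_[q])‖ = 1 := by
      push_cast
      rw [norm_pow, Padic.norm_natCast_eq_one_of_prime_ne hpq, one_pow]
    have h := hf ((p : ℚ) ^ k) hunit.le
    rw [hunit, if_neg (lt_irrefl 1), sub_zero] at h
    simpa using h
  have hzero : ‖(Polynomial.aeval (0 : ℚ_[p])) f‖ < 1 :=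
    norm_apply_zero_lt_of_forall_norm_apply_pow_lt (Polynomial.continuous_aeval f)
      Padic.norm_p_lt_one hpow
  have hone := hf 0 (by simp)
  simp only [Rat.cast_zero, norm_zero, zero_lt_one, if_true] at hone
  exact hone.ne (norm_sub_one_eq_one_of_norm_lt_one hzero)

noncomputable def indicatorUnitBall (p q : ℕ) [Fact p.Prime] [Fact q.Prime] : C(ℤ_[q], ℤ_[p]) :=
  ⟨(Metric.ball 0 1).indicator 1,
    (IsUltrametricDist.isClopen_ball 0 1).continuous_indicator continuous_const⟩

lemma coe_indicatorUnitBall_apply (p q : ℕ) [Fact p.Prime] [Fact q.Prime] (z : ℤ_[q]) :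
    (indicatorUnitBall p q z : ℚ_[p]) = if ‖(z : ℚ_[q])‖ < 1 then 1 else 0 := by
  have hz : indicatorUnitBall p q z = if ‖z‖ < 1 then 1 else 0 := by
    simp only [indicatorUnitBall, ContinuousMap.coe_mk, Set.indicator, mem_ball_zero_iff,
      Pi.one_apply]
  rw [hz, ← PadicInt.norm_def]
  split_ifs <;> simp

/-- Let `p ≠ q` be primes. The set of continuous functions `ℤ_q → ℤ_p` that
agree with some rational polynomial on the rational points of `ℤ_q` is not dense in
`C(ℤ_q, ℤ_p)` (compact-open = uniform convergence topology, since `ℤ_q` is compact).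
In particular, the characteristic function of `qℤ_q = {x : |x|_q < 1}` cannot be uniformly
approximated modulo `pℤ_p` by any rational polynomial. -/
theorem polynomials_not_dense_in_C_Zq_Zp (p q : ℕ) [Fact p.Prime] [Fact q.Prime]
    (hpq : p ≠ q) :
    ¬ Dense {F : C(ℤ_[q], ℤ_[p]) | ∃ f : Polynomial ℚ,
          ∀ x : ℚ, ∀ hx : ‖(x : ℚ_[q])‖ ≤ 1,
            ((F ⟨(x : ℚ_[q]), hx⟩ : ℤ_[p]) : ℚ_[p]) = (Polynomial.aeval ((x : ℚ) : ℚ_[p])) f}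
      ∧ ∀ f : Polynomial ℚ, ¬ ∀ x : ℚ, ‖(x : ℚ_[q])‖ ≤ 1 →
          ‖(Polynomial.aeval ((x : ℚ) : ℚ_[p])) f
              - (if ‖(x : ℚ_[q])‖ < 1 then 1 else 0)‖ < 1 := by
  refine ⟨fun hdense => ?_, not_forall_norm_aeval_sub_indicator_lt_one p q hpq⟩
  obtain ⟨F, ⟨f, hFf⟩, hF⟩ := Metric.mem_closure_iff.mp
    (hdense.closure_eq ▸ Set.mem_univ (indicatorUnitBall p q)) 1 one_pos
  refine not_forall_norm_aeval_sub_indicator_lt_one p q hpq f fun x hx => ?_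
  calc ‖(Polynomial.aeval (x : ℚ_[p])) f - if ‖(x : ℚ_[q])‖ < 1 then 1 else 0‖
      = dist (F ⟨x, hx⟩) (indicatorUnitBall p q ⟨x, hx⟩) := by
        rw [dist_eq_norm, PadicInt.norm_def, PadicInt.coe_sub,
          coe_indicatorUnitBall_apply p q ⟨x, hx⟩, hFf x hx]
    _ ≤ dist F (indicatorUnitBall p q) := ContinuousMap.dist_apply_le_dist _
    _ < 1 := by rwa [dist_comm]
end

section
/- Let E_p ⊆ ℤ_p and n ≥ 0. Then the n-th characteristic module I_n(E_p) = {leading coefficients of polynomials of degree ≤ n in Int_ℚ(E_p, ℤ_p)} equals ℤ_(p) if and only if #(E_p mod p) > n, i.e., E_p meets strictly more than n distinct residue classes modulo p. -/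
open Polynomial

instance (p : Nat.Primes) : Fact (p : ℕ).Prime := ⟨p.2⟩

/-- `Ẑ = ∏_p ℤ_p`, the profinite completion of `ℤ` (product model). -/
abbrev Zhat : Type := ∀ p : Nat.Primes, ℤ_[(p : ℕ)]

/-- `Int_ℚ(E, Ẑ) = {f ∈ ℚ[x] : f(α_p) ∈ ℤ_p for all (α_p)_p ∈ E and all primes p}`. -/
def IntQ (E : Set Zhat) : Set (Polynomial ℚ) :=
  {f | ∀ α ∈ E, ∀ p : Nat.Primes, ‖(Polynomial.aeval ((α p : ℚ_[(p : ℕ)]))) f‖ ≤ 1}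

/-- `Int_ℚ(E_p, ℤ_p) = {f ∈ ℚ[x] : f(E_p) ⊆ ℤ_p}`. -/
def IntQp (p : Nat.Primes) (S : Set ℤ_[(p : ℕ)]) : Set (Polynomial ℚ) :=
  {f | ∀ x ∈ S, ‖(Polynomial.aeval ((x : ℚ_[(p : ℕ)]))) f‖ ≤ 1}
/-- The `n`-th characteristic `ℤ`-module of `Int_ℚ(E, Ẑ)`: leading coefficients of its
elements of degree `≤ n` (with `lc 0 = 0` by convention). -/
def In (E : Set Zhat) (n : ℕ) : Set ℚ :=
  {c | ∃ f ∈ IntQ E, f.degree ≤ (n : ℕ) ∧ f.leadingCoeff = c}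

/-- The `n`-th characteristic module of `Int_ℚ(E_p, ℤ_p)`. -/
def Inp (p : Nat.Primes) (S : Set ℤ_[(p : ℕ)]) (n : ℕ) : Set ℚ :=
  {c | ∃ f ∈ IntQp p S, f.degree ≤ (n : ℕ) ∧ f.leadingCoeff = c}

section aux

variable {p : ℕ} [hp : Fact p.Prime]

/-- elements of the maximal ideal have norm ≤ 1/p -/
lemma aux_norm_le_inv_p {x : ℤ_[p]} (hx : x ∈ IsLocalRing.maximalIdeal ℤ_[p]) :
    ‖x‖ ≤ (p : ℝ)⁻¹ := by
  rw [PadicInt.maximalIdeal_eq_span_p, Ideal.mem_span_singleton] at hx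
  obtain ⟨c, rfl⟩ := hx
  rw [norm_mul, PadicInt.norm_p]
  calc (p:ℝ)⁻¹ * ‖c‖ ≤ (p:ℝ)⁻¹ * 1 := by
        exact mul_le_mul_of_nonneg_left (PadicInt.norm_le_one c) (by positivity)
    _ = (p:ℝ)⁻¹ := mul_one _

/-- distinct residues mod p implies norm of difference is 1 -/
lemma aux_norm_sub_eq_one {x y : ℤ_[p]} (h : PadicInt.toZMod x ≠ PadicInt.toZMod y) :
    ‖(x : ℚ_[p]) - (y : ℚ_[p])‖ = 1 := by
  have h1 : (x : ℚ_[p]) - (y : ℚ_[p]) = ((x - y : ℤ_[p]) : ℚ_[p]) := by push_cast; ring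
  rw [h1, ← PadicInt.norm_def]
  rcases lt_or_eq_of_le (PadicInt.norm_le_one (x - y)) with hlt | heq
  · exfalso
    have hmem : x - y ∈ IsLocalRing.maximalIdeal ℤ_[p] := by
      rw [PadicInt.maximalIdeal_eq_span_p, Ideal.mem_span_singleton,
        ← PadicInt.norm_lt_one_iff_dvd]
      exact hlt
    rw [← PadicInt.ker_toZMod, RingHom.mem_ker, map_sub, sub_eq_zero] at hmem
    exact h hmem
  · exact heq

end aux

/-- For `E_p ⊆ ℤ_p` and `n ≥ 0`, the characteristic module `I_n(E_p)`
equals `ℤ_(p) = {c ∈ ℚ : |c|_p ≤ 1}` if and only if `E_p` meets strictly more than `n`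
residue classes modulo `p`. -/
theorem Inp_eq_zLocalization_iff (p : Nat.Primes) (Ep : Set ℤ_[(p : ℕ)]) (n : ℕ) :
    Inp p Ep n = {c : ℚ | ‖(c : ℚ_[(p : ℕ)])‖ ≤ 1}
      ↔ n < (PadicInt.toZMod '' Ep).ncard := by
  classical
  have hfin : (PadicInt.toZMod '' Ep).Finite := Set.toFinite _
  set F : Finset (ZMod (p : ℕ)) := hfin.toFinset with hF
  have hcard : (PadicInt.toZMod '' Ep).ncard = F.card :=
    Set.ncard_eq_toFinset_card _ hfin
  constructor
  · -- forward: contrapositive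
    intro h
    by_contra hn
    push_neg at hn  -- ncard ≤ n
    -- build f = C (1/p) * ∏ (X - C t.val)
    set q : Polynomial ℚ := ∏ t ∈ F, (X - C ((t.val : ℚ))) with hq
    have hqmonic : q.Monic := monic_prod_of_monic _ _ (fun t _ => monic_X_sub_C _)
    have hqdeg : q.natDegree = F.card := by
      rw [hq, natDegree_prod _ _ (fun t _ => X_sub_C_ne_zero _)]
      simp [natDegree_X_sub_C]
    set f : Polynomial ℚ := C ((p : ℚ))⁻¹ * q with hfdef
    have hpQ : ((p : ℚ))⁻¹ ≠ 0 := by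
      simp [Nat.Prime.ne_zero p.2]
    have hlc : f.leadingCoeff = ((p : ℚ))⁻¹ := by
      rw [hfdef, leadingCoeff_mul, leadingCoeff_C, hqmonic.leadingCoeff, mul_one]
    have hfdeg : f.degree ≤ (n : ℕ) := by
      calc f.degree ≤ f.natDegree := degree_le_natDegree
        _ ≤ (n : ℕ) := by
          have : f.natDegree = F.card := by
            rw [hfdef, natDegree_C_mul hpQ, hqdeg]
          rw [this]
          exact_mod_cast Nat.cast_le.mpr (by omega : F.card ≤ n)
    have hfmem : f ∈ IntQp p Ep := by
      intro x hx
      have : (Polynomial.aeval ((x : ℚ_[(p:ℕ)]))) f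
          = (((p : ℚ))⁻¹ : ℚ_[(p:ℕ)]) * ∏ t ∈ F, ((x : ℚ_[(p:ℕ)]) - ((t.val : ℕ) : ℚ_[(p:ℕ)])) := by
        rw [hfdef, map_mul, aeval_C, hq, map_prod]
        congr 1
        · rw [eq_ratCast]; push_cast; ring
        · apply Finset.prod_congr rfl
          intro t _
          rw [map_sub, aeval_X, aeval_C, eq_ratCast]
          push_cast
          ring
      rw [this, norm_mul]
      have hnp : ‖(((p : ℚ))⁻¹ : ℚ_[(p:ℕ)])‖ = (p : ℝ) := by
        push_cast
        rw [norm_inv, Padic.norm_p, inv_inv]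
      rw [hnp]
      -- bound product by 1/p
      have ht0 : PadicInt.toZMod x ∈ F := by
        rw [hF, Set.Finite.mem_toFinset]
        exact Set.mem_image_of_mem _ hx
      have hprod : ‖∏ t ∈ F, ((x : ℚ_[(p:ℕ)]) - ((t.val : ℕ) : ℚ_[(p:ℕ)]))‖ ≤ ((p:ℕ) : ℝ)⁻¹ := by
        rw [← Finset.mul_prod_erase _ _ ht0, norm_mul]
        have h1 : ‖(x : ℚ_[(p:ℕ)]) - (((PadicInt.toZMod x).val : ℕ) : ℚ_[(p:ℕ)])‖ ≤ ((p:ℕ) : ℝ)⁻¹ := by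
          have hc : (x : ℚ_[(p:ℕ)]) - (((PadicInt.toZMod x).val : ℕ) : ℚ_[(p:ℕ)])
              = ((x - (((PadicInt.toZMod x).val : ℕ) : ℤ_[(p:ℕ)]) : ℤ_[(p:ℕ)]) : ℚ_[(p:ℕ)]) := by
            push_cast; ring
          rw [hc, ← PadicInt.norm_def]
          apply aux_norm_le_inv_p
          have := PadicInt.toZMod_spec x
          rwa [← ZMod.natCast_val] at this
        have h2 : ∏ t ∈ F.erase (PadicInt.toZMod x),
            ‖(x : ℚ_[(p:ℕ)]) - ((t.val : ℕ) : ℚ_[(p:ℕ)])‖ ≤ 1 := by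
          apply Finset.prod_le_one (fun t _ => norm_nonneg _)
          intro t _
          have hc : (x : ℚ_[(p:ℕ)]) - ((t.val : ℕ) : ℚ_[(p:ℕ)])
              = ((x - ((t.val : ℕ) : ℤ_[(p:ℕ)]) : ℤ_[(p:ℕ)]) : ℚ_[(p:ℕ)]) := by
            push_cast; ring
          rw [hc, ← PadicInt.norm_def]
          exact PadicInt.norm_le_one _
        calc ‖(x : ℚ_[(p:ℕ)]) - (((PadicInt.toZMod x).val : ℕ) : ℚ_[(p:ℕ)])‖ *
              ‖∏ t ∈ F.erase (PadicInt.toZMod x), ((x : ℚ_[(p:ℕ)]) - ((t.val : ℕ) : ℚ_[(p:ℕ)]))‖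
            ≤ ((p:ℕ) : ℝ)⁻¹ * 1 := by
              apply mul_le_mul h1 _ (norm_nonneg _) (by positivity)
              rw [norm_prod]
              exact h2
          _ = ((p:ℕ) : ℝ)⁻¹ := mul_one _
      calc (p : ℝ) * ‖∏ t ∈ F, ((x : ℚ_[(p:ℕ)]) - ((t.val : ℕ) : ℚ_[(p:ℕ)]))‖
          ≤ (p : ℝ) * ((p:ℕ) : ℝ)⁻¹ := by
            exact mul_le_mul_of_nonneg_left hprod (by positivity)
        _ = 1 := by
            rw [mul_inv_cancel₀]
            exact_mod_cast Nat.Prime.ne_zero p.2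
    -- derive contradiction: (p:ℚ)⁻¹ ∈ LHS but not RHS
    have hmem : ((p : ℚ))⁻¹ ∈ Inp p Ep n := ⟨f, hfmem, hfdeg, hlc⟩
    rw [h] at hmem
    simp only [Set.mem_setOf_eq] at hmem
    have : ‖((((p : ℚ))⁻¹ : ℚ) : ℚ_[(p:ℕ)])‖ = (p : ℝ) := by
      push_cast
      rw [norm_inv, Padic.norm_p, inv_inv]
    rw [this] at hmem
    have := Nat.Prime.one_lt p.2
    have : (1 : ℝ) < (p : ℝ) := by exact_mod_cast this
    linarith
  · -- backward
    intro hn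
    ext c
    simp only [Set.mem_setOf_eq]
    constructor
    · rintro ⟨f, hf, hdeg, rfl⟩
      by_cases hf0 : f = 0
      · simp [hf0]
      set d : ℕ := f.natDegree with hd
      have hdn : d ≤ n := natDegree_le_iff_degree_le.mpr hdeg
      have hsize : d + 1 ≤ F.card := by
        rw [← hcard]; omega
      obtain ⟨T, hTF, hTcard⟩ := Finset.exists_subset_card_eq hsize
      -- choose preimages
      have hex : ∀ t : ZMod (p:ℕ), ∃ x : ℤ_[(p:ℕ)],
          t ∈ T → x ∈ Ep ∧ PadicInt.toZMod x = t := by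
        intro t
        by_cases ht : t ∈ T
        · have : t ∈ PadicInt.toZMod '' Ep := by
            have := hTF ht
            rwa [hF, Set.Finite.mem_toFinset] at this
          obtain ⟨x, hx1, hx2⟩ := this
          exact ⟨x, fun _ => ⟨hx1, hx2⟩⟩
        · exact ⟨0, fun h => absurd h ht⟩
      choose g hgspec using hex
      set v : ZMod (p:ℕ) → ℚ_[(p:ℕ)] := fun t => ((g t : ℤ_[(p:ℕ)]) : ℚ_[(p:ℕ)]) with hv
      have hvinj : Set.InjOn v T := by
        intro t1 ht1 t2 ht2 heq
        have hg12 : g t1 = g t2 := Subtype.coe_injective heq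
        rw [← (hgspec t1 ht1).2, ← (hgspec t2 ht2).2, hg12]
      set Fp : Polynomial ℚ_[(p:ℕ)] := f.map (algebraMap ℚ ℚ_[(p:ℕ)]) with hFp
      have hFpdeg : Fp.degree < (T.card : ℕ) := by
        rw [hFp, degree_map, hTcard]
        calc f.degree ≤ (d : ℕ) := degree_le_natDegree
          _ < ((d + 1 : ℕ) : WithBot ℕ) := by exact_mod_cast Nat.lt_succ_self d
      have hinterp := Lagrange.eq_interpolate hvinj hFpdeg
      -- take coeff d
      have hco : Fp.coeff d = ∑ i ∈ T, Fp.eval (v i) * (Lagrange.basis T v i).coeff d := by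
        conv_lhs => rw [hinterp]
        rw [Lagrange.interpolate_apply, finset_sum_coeff]
        apply Finset.sum_congr rfl
        intro i _
        rw [coeff_C_mul]
      have hbasis : ∀ i ∈ T, ‖(Lagrange.basis T v i).coeff d‖ = 1 := by
        intro i hi
        have hnd : (Lagrange.basis T v i).natDegree = d := by
          rw [Lagrange.natDegree_basis hvinj hi, hTcard]; omega
        have hcoeff : (Lagrange.basis T v i).coeff d = (Lagrange.basis T v i).leadingCoeff := by
          rw [← hnd]; rfl
        rw [hcoeff, Lagrange.basis, leadingCoeff_prod]
        rw [norm_prod]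
        apply Finset.prod_eq_one
        intro j hj
        obtain ⟨hij, hjT⟩ := Finset.mem_erase.mp hj
        have hvij : v i ≠ v j := fun hh => hij (hvinj hjT hi hh.symm)
        have : (Lagrange.basisDivisor (v i) (v j)).leadingCoeff = (v i - v j)⁻¹ := by
          rw [Lagrange.basisDivisor, leadingCoeff_mul, leadingCoeff_C,
            leadingCoeff_X_sub_C, mul_one]
        rw [this, norm_inv]
        have : ‖v i - v j‖ = 1 := by
          apply aux_norm_sub_eq_one
          rw [(hgspec i hi).2, (hgspec j hjT).2]
          exact hij.symm
        rw [this, inv_one]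
      have hsum : ‖Fp.coeff d‖ ≤ 1 := by
        rw [hco]
        apply IsUltrametricDist.norm_sum_le_of_forall_le_of_nonneg zero_le_one
        intro i hi
        rw [norm_mul, hbasis i hi]
        have heval : Fp.eval (v i) = (Polynomial.aeval ((g i : ℚ_[(p:ℕ)]))) f := by
          rw [hFp, eval_map, aeval_def, hv]
        rw [heval, mul_one]
        exact hf (g i) (hgspec i hi).1
      have hcoeq : Fp.coeff d = ((f.leadingCoeff : ℚ) : ℚ_[(p:ℕ)]) := by
        rw [hFp, coeff_map, hd, ← leadingCoeff, eq_ratCast]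
      rwa [hcoeq] at hsum
    · intro hc
      exact ⟨C c, fun x _ => by rw [aeval_C, eq_ratCast]; exact hc,
        le_trans degree_C_le (by exact_mod_cast Nat.cast_nonneg n), leadingCoeff_C c⟩
end

section
/- Let E = ∏_p E_p ⊆ Ẑ be compact, and suppose for each prime p that E_p is infinite so that I_n(E_p) = p^{-n_p} ℤ_(p) for some integer n_p ≥ 0. Then I_n(E) = Σ_p p^{-n_p} ℤ (the ℤ-submodule of ℚ generated by all p^{-n_p}). In particular, I_n(E) is a fractional ideal of ℤ if and only if n_p = 0 for all but finitely many p, in which case I_n(E) = (∏_p p^{n_p})^{-1} ℤ. -/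
open Polynomial

/-!
A polynomial `f` that is integer-valued on `E_p` becomes integer-valued on all of `E` after
multiplication by the prime-to-`p` part `M` of a common denominator of its coefficients: `M f`
has `q`-integral coefficients for every `q ≠ p`. Since `M` is prime to `p`, Bézout together with
`1 ∈ I_n(E)` gives `p^{-n_p} ∈ I_n(E)`. Conversely `I_n(E) ⊆ I_n(E_p)` for each `p`, so the
denominator of any `c ∈ I_n(E)` has `p`-adic valuation at most `n_p`, and such a `1 / d` is a
`ℤ`-combination of the `p^{-n_p}` by the Chinese remainder theorem. A finitely generated
`ℤ`-submodule of `ℚ` has bounded denominators, which forces `n_p = 0` for almost all `p`.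
-/

open Set Submodule

section Padic

variable {p : ℕ} [Fact p.Prime]

theorem Padic.norm_aeval_le_one {f : ℚ[X]} (hf : ∀ i, ‖(f.coeff i : ℚ_[p])‖ ≤ 1) {x : ℚ_[p]}
    (hx : ‖x‖ ≤ 1) : ‖aeval x f‖ ≤ 1 := by
  rw [aeval_eq_sum_range]
  refine IsUltrametricDist.norm_sum_le_of_forall_le_of_nonneg zero_le_one fun i _ => ?_
  rw [Algebra.smul_def, norm_mul, norm_pow, eq_ratCast]
  exact mul_le_one₀ (hf i) (by positivity) (pow_le_one₀ (norm_nonneg _) hx)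

theorem Padic.norm_ratCast_le_one_of_mul_pow_eq_intCast {q : ℕ} (hq : q.Prime) (hpq : p ≠ q)
    {x : ℚ} {e : ℕ} {z : ℤ} (h : x * q ^ e = z) : ‖(x : ℚ_[p])‖ ≤ 1 := by
  have hq1 : ‖(q : ℚ_[p])‖ = 1 :=
    norm_natCast_eq_one_iff.2 ((Nat.coprime_primes Fact.out hq).2 hpq)
  have := Padic.norm_int_le_one (p := p) z
  rwa [← Rat.cast_intCast, ← h, Rat.cast_mul, norm_mul, Rat.cast_pow, norm_pow, Rat.cast_natCast,
    hq1, one_pow, mul_one] at this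

theorem Padic.factorization_den_le_of_norm_mul_pow_le_one {c : ℚ} {k : ℕ}
    (h : ‖(c : ℚ_[p]) * (p : ℚ_[p]) ^ k‖ ≤ 1) : c.den.factorization p ≤ k := by
  have hp : p.Prime := Fact.out
  rcases eq_or_ne c 0 with rfl | hc
  · simp
  by_cases hpd : p ∣ c.den
  swap
  · simp [Nat.factorization_eq_zero_of_not_dvd hpd]
  have hnum : padicValInt p c.num = 0 := by
    refine padicValInt.eq_zero_of_not_dvd fun hpn => hp.one_lt.ne' ?_
    exact Nat.eq_one_of_dvd_coprimes c.reduced (Int.natCast_dvd.1 hpn) hpd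
  rw [Padic.norm_le_one_iff_val_nonneg, Padic.valuation_mul (by simpa) (by simp [hp.ne_zero]),
    Padic.valuation_pow, Padic.valuation_p, Padic.valuation_ratCast, padicValRat_def, hnum] at h
  rw [Nat.factorization_def _ hp]
  omega

end Padic

theorem Submodule.mem_of_isCoprime_smul_mem {R M : Type*} [CommRing R] [AddCommGroup M]
    [Module R M] {L : Submodule R M} {a b : R} (hab : IsCoprime a b) {x : M} (ha : a • x ∈ L)
    (hb : b • x ∈ L) : x ∈ L := by
  obtain ⟨u, v, huv⟩ := hab
  have hx : x = u • a • x + v • b • x := by rw [smul_smul, smul_smul, ← add_smul, huv, one_smul]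
  rw [hx]
  exact L.add_mem (L.smul_mem u ha) (L.smul_mem v hb)

section SpanInvPow

variable (np : Nat.Primes → ℕ)

theorem inv_natCast_mem_span_inv_pow {d : ℕ} (hd : ∀ p : Nat.Primes, d.factorization p ≤ np p) :
    (d : ℚ)⁻¹ ∈ span ℤ (range fun p : Nat.Primes => ((p : ℚ) ^ np p)⁻¹) := by
  induction d using Nat.recOnPrimeCoprime with
  | zero => simp
  | prime_pow p k hp =>
    set P : Nat.Primes := ⟨p, hp⟩
    have hk : k ≤ np P := by simpa [P, hp.factorization_pow] using hd P
    have hpk : ((p ^ k : ℕ) : ℚ)⁻¹ = ((p ^ (np P - k) : ℕ) : ℤ) • ((P : ℚ) ^ np P)⁻¹ := by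
      have hp0 : (p : ℚ) ≠ 0 := by exact_mod_cast hp.ne_zero
      rw [zsmul_eq_mul, ← Nat.sub_add_cancel hk]
      push_cast
      simp only [P, Nat.add_sub_cancel]
      field_simp
      ring
    rw [hpk]
    exact smul_mem _ _ (subset_span ⟨P, rfl⟩)
  | coprime a b ha hb hab iha ihb =>
    have hfac := Nat.factorization_mul (a := a) (b := b) (by omega) (by omega)
    have hxa : ((a : ℤ) • ((a * b : ℕ) : ℚ)⁻¹) = (b : ℚ)⁻¹ := by
      have : (a : ℚ) ≠ 0 := by exact_mod_cast (show a ≠ 0 by omega)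
      rw [zsmul_eq_mul]
      push_cast
      field_simp
    have hxb : ((b : ℤ) • ((a * b : ℕ) : ℚ)⁻¹) = (a : ℚ)⁻¹ := by
      have : (b : ℚ) ≠ 0 := by exact_mod_cast (show b ≠ 0 by omega)
      rw [zsmul_eq_mul]
      push_cast
      field_simp
    refine mem_of_isCoprime_smul_mem (Nat.isCoprime_iff_coprime.2 hab) ?_ ?_
    · rw [hxa]
      exact ihb fun p => le_trans (by simp [hfac]) (hd p)
    · rw [hxb]
      exact iha fun p => le_trans (by simp [hfac]) (hd p)

theorem factorization_prod_pow_le (T : Finset Nat.Primes) (q : Nat.Primes) :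
    (∏ p ∈ T, (p : ℕ) ^ np p).factorization q ≤ np q := by
  classical
  rw [Nat.factorization_prod fun p _ => pow_ne_zero _ p.2.ne_zero, Finset.sum_apply']
  calc ∑ p ∈ T, ((p : ℕ) ^ np p).factorization q
      = ∑ p ∈ T, if p = q then np q else 0 := Finset.sum_congr rfl fun p _ => by
        rw [p.2.factorization_pow, Finsupp.single_apply]
        by_cases hpq : p = q
        · simp [hpq]
        · simp [hpq, mt Subtype.ext hpq]
    _ ≤ np q := by
      rw [Finset.sum_ite_eq']
      split_ifs <;> omega

theorem span_inv_pow_eq_span_singleton (h : {p : Nat.Primes | np p ≠ 0}.Finite) :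
    span ℤ (range fun p : Nat.Primes => ((p : ℚ) ^ np p)⁻¹)
      = span ℤ {(∏ p ∈ h.toFinset, (p : ℚ) ^ np p)⁻¹} := by
  set D : ℕ := ∏ p ∈ h.toFinset, (p : ℕ) ^ np p
  have hD : (D : ℚ) = ∏ p ∈ h.toFinset, (p : ℚ) ^ np p := by push_cast [D]; rfl
  have hD0 : (D : ℚ) ≠ 0 := by
    rw [hD]
    exact Finset.prod_ne_zero_iff.2 fun p _ => pow_ne_zero _ (mod_cast p.2.ne_zero)
  rw [← hD]
  refine le_antisymm (span_le.2 (range_subset_iff.2 fun p => ?_)) ?_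
  · have hdvd : (p : ℕ) ^ np p ∣ D := by
      by_cases hp : np p = 0
      · simp [hp]
      · exact Finset.dvd_prod_of_mem _ (h.mem_toFinset.2 hp)
    obtain ⟨t, ht⟩ := hdvd
    refine mem_span_singleton.2 ⟨t, ?_⟩
    have hpt : (D : ℚ) = (p : ℚ) ^ np p * t := by exact_mod_cast ht
    rw [zsmul_eq_mul, Int.cast_natCast, hpt]
    rw [hpt] at hD0
    field_simp [left_ne_zero_of_mul hD0, right_ne_zero_of_mul hD0]
  · rw [span_le, singleton_subset_iff]
    exact inv_natCast_mem_span_inv_pow np (factorization_prod_pow_le np _)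

theorem finite_of_fg_span_inv_pow
    (hfg : (span ℤ (range fun p : Nat.Primes => ((p : ℚ) ^ np p)⁻¹)).FG) :
    {p : Nat.Primes | np p ≠ 0}.Finite := by
  obtain ⟨a, ha0, ha⟩ := FractionalIdeal.isFractional_of_fg (S := nonZeroDivisors ℤ) hfg
  have ha0 : a ≠ 0 := nonZeroDivisors.ne_zero ha0
  have hdvd : ∀ p : Nat.Primes, np p ≠ 0 → (p : ℕ) ∣ a.natAbs := by
    intro p hp
    obtain ⟨z, hz⟩ := ha _ (subset_span ⟨p, rfl⟩)
    have hpa : (p : ℤ) ^ np p ∣ a := by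
      refine ⟨z, ?_⟩
      have hp0 : (p : ℚ) ^ np p ≠ 0 := pow_ne_zero _ (mod_cast p.2.ne_zero)
      rw [algebraMap_int_eq, eq_intCast, zsmul_eq_mul] at hz
      have : (a : ℚ) = (p : ℚ) ^ np p * z := by rw [hz]; field_simp
      exact_mod_cast this
    exact Int.natCast_dvd.1 ((dvd_pow_self _ hp).trans hpa)
  refine (a.natAbs.divisors.finite_toSet.preimage Subtype.val_injective.injOn).subset
    fun p hp => Nat.mem_divisors.2 ⟨hdvd p hp, by simpa using ha0⟩

end SpanInvPow

def IntQ.subring (E : Set Zhat) : Subring ℚ[X] where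
  carrier := IntQ E
  zero_mem' _ _ _ := by simp
  one_mem' _ _ _ := by simp
  add_mem' hf hg α hα p := by
    rw [map_add]
    exact (Padic.nonarchimedean _ _).trans (max_le (hf α hα p) (hg α hα p))
  mul_mem' hf hg α hα p := by
    rw [map_mul, norm_mul]
    exact mul_le_one₀ (hf α hα p) (norm_nonneg _) (hg α hα p)
  neg_mem' hf α hα p := by
    rw [map_neg, norm_neg]
    exact hf α hα p

theorem X_mem_IntQ (E : Set Zhat) : X ∈ IntQ E := fun α _ p => by
  rw [aeval_X]
  exact (α p).2

theorem mem_In_iff_exists_coeff {E : Set Zhat} {n : ℕ} {c : ℚ} :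
    c ∈ In E n ↔ ∃ f ∈ IntQ E, f.degree ≤ n ∧ f.coeff n = c := by
  constructor
  · rintro ⟨f, hf, hdeg, rfl⟩
    have hfn := natDegree_le_iff_degree_le.2 hdeg
    refine ⟨f * X ^ (n - f.natDegree),
      (IntQ.subring E).mul_mem hf ((IntQ.subring E).pow_mem (X_mem_IntQ E) _), ?_, ?_⟩
    · refine natDegree_le_iff_degree_le.1 (natDegree_mul_le.trans ?_)
      rw [natDegree_X_pow]
      omega
    · rw [coeff_mul_X_pow', if_pos (Nat.sub_le _ _), Nat.sub_sub_self hfn, leadingCoeff]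
  · rintro ⟨f, hf, hdeg, rfl⟩
    rcases eq_or_ne (f.coeff n) 0 with h | h
    · exact ⟨0, (IntQ.subring E).zero_mem, by simp, by simp [h]⟩
    · refine ⟨f, hf, hdeg, ?_⟩
      rw [leadingCoeff, natDegree_eq_of_le_of_coeff_ne_zero (natDegree_le_iff_degree_le.2 hdeg) h]

def In.submodule (E : Set Zhat) (n : ℕ) : Submodule ℤ ℚ where
  carrier := In E n
  zero_mem' := mem_In_iff_exists_coeff.2 ⟨0, (IntQ.subring E).zero_mem, by simp, by simp⟩
  add_mem' := by
    simp only [mem_In_iff_exists_coeff]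
    rintro _ _ ⟨f, hf, hfd, rfl⟩ ⟨g, hg, hgd, rfl⟩
    exact ⟨f + g, (IntQ.subring E).add_mem hf hg, (degree_add_le _ _).trans (max_le hfd hgd),
      coeff_add _ _ _⟩
  smul_mem' m := by
    simp only [mem_In_iff_exists_coeff]
    rintro _ ⟨f, hf, hfd, rfl⟩
    exact ⟨m • f, (IntQ.subring E).zsmul_mem hf m, (degree_smul_le _ _).trans hfd, coeff_smul _ _ _⟩

theorem one_mem_In (E : Set Zhat) (n : ℕ) : 1 ∈ In E n :=
  mem_In_iff_exists_coeff.2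
    ⟨X ^ n, (IntQ.subring E).pow_mem (X_mem_IntQ E) n, degree_X_pow_le n, coeff_X_pow_self n⟩

section Product

variable {Ep : ∀ p : Nat.Primes, Set ℤ_[(p : ℕ)]} {n : ℕ}

theorem IntQ_pi_subset_IntQp (hne : ∀ p, (Ep p).Nonempty) (p : Nat.Primes) :
    IntQ (Set.univ.pi Ep) ⊆ IntQp p (Ep p) := by
  classical
  intro f hf x hx
  have hα : Function.update (fun q => (hne q).some) p x ∈ Set.univ.pi Ep := by
    intro q _
    rcases eq_or_ne q p with rfl | hq
    · simpa using hx
    · simpa [Function.update_of_ne hq] using (hne q).some_mem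
  simpa using hf _ hα p

theorem In_pi_subset_Inp (hne : ∀ p, (Ep p).Nonempty) (p : Nat.Primes) :
    In (Set.univ.pi Ep) n ⊆ Inp p (Ep p) n := by
  rintro c ⟨f, hf, hfd, rfl⟩
  exact ⟨f, IntQ_pi_subset_IntQp hne p hf, hfd, rfl⟩

theorem exists_isCoprime_mul_mem_In_pi {p : Nat.Primes} {c : ℚ} (hc : c ∈ Inp p (Ep p) n) :
    ∃ M : ℤ, IsCoprime M p ∧ (M : ℚ) * c ∈ In (Set.univ.pi Ep) n := by
  obtain ⟨f, hf, hfd, rfl⟩ := hc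
  -- `M` is the prime-to-`p` part of a common denominator `b` of the coefficients of `f`.
  obtain ⟨b, hb⟩ :=
    IsLocalization.exist_integer_multiples (nonZeroDivisors ℤ) f.support f.coeff
  have hp : Prime (p : ℤ) := Nat.prime_iff_prime_int.1 p.2
  obtain ⟨M, hbM, hpM⟩ := (Int.finiteMultiplicity_iff (a := p).2
    ⟨by simpa using p.2.ne_one, nonZeroDivisors.ne_zero b.2⟩).exists_eq_pow_mul_and_not_dvd
  generalize multiplicity (p : ℤ) (b : ℤ) = e at hbM
  refine ⟨M, (hp.irreducible.coprime_iff_not_dvd.2 hpM).symm, C (M : ℚ) * f,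
    fun α hα q => ?_, (degree_mul_le _ _).trans ?_, by rw [leadingCoeff_mul, leadingCoeff_C]⟩
  · rcases eq_or_ne q p with rfl | hq
    · rw [map_mul, aeval_C, norm_mul, map_intCast]
      exact mul_le_one₀ (Padic.norm_int_le_one M) (norm_nonneg _) (hf _ (hα q trivial))
    refine Padic.norm_aeval_le_one (fun i => ?_) (α q).2
    rw [coeff_C_mul]
    by_cases hi : i ∈ f.support
    · obtain ⟨z, hz⟩ := hb i hi
      refine Padic.norm_ratCast_le_one_of_mul_pow_eq_intCast p.2 (e := e) (z := z)
        (fun h => hq (Subtype.ext h)) ?_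
      rw [algebraMap_int_eq, eq_intCast, zsmul_eq_mul, hbM] at hz
      rw [hz]
      push_cast
      ring
    · simp [notMem_support_iff.1 hi]
  · simpa using add_le_add (degree_C_le (a := (M : ℚ))) hfd

theorem inv_pow_mem_In_pi {p : Nat.Primes} {k : ℕ} (hk : ((p : ℚ) ^ k)⁻¹ ∈ Inp p (Ep p) n) :
    ((p : ℚ) ^ k)⁻¹ ∈ In (Set.univ.pi Ep) n := by
  obtain ⟨M, hM, hMmem⟩ := exists_isCoprime_mul_mem_In_pi hk
  refine (In.submodule _ n).mem_of_isCoprime_smul_mem (hM.pow_right (n := k))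
    (by rwa [zsmul_eq_mul]) ?_
  have hp0 : (p : ℚ) ^ k ≠ 0 := pow_ne_zero _ (mod_cast p.2.ne_zero)
  rw [zsmul_eq_mul, Int.cast_pow, Int.cast_natCast, mul_inv_cancel₀ hp0]
  exact one_mem_In _ n

end Product

theorem In_pi_eq_span_of_local_data_general (Ep : ∀ p : Nat.Primes, Set ℤ_[(p : ℕ)])
    (hinf : ∀ p, (Ep p).Infinite)
    (n : ℕ) (np : Nat.Primes → ℕ)
    (hnp : ∀ p : Nat.Primes,
      Inp p (Ep p) n = {c : ℚ | ‖(c : ℚ_[(p : ℕ)]) * (p : ℚ_[(p : ℕ)]) ^ (np p)‖ ≤ 1}) :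
    In (Set.univ.pi Ep) n
        = (Submodule.span ℤ (Set.range fun p : Nat.Primes => ((p : ℚ) ^ (np p))⁻¹) : Set ℚ)
      ∧ ((Submodule.span ℤ (In (Set.univ.pi Ep) n)).FG ↔ {p : Nat.Primes | np p ≠ 0}.Finite)
      ∧ ∀ h : {p : Nat.Primes | np p ≠ 0}.Finite,
          In (Set.univ.pi Ep) n
            = {c : ℚ | ∃ m : ℤ, c = m / ∏ p ∈ h.toFinset, (p : ℚ) ^ (np p)} := by
  have hspan : In (Set.univ.pi Ep) n
      = (span ℤ (range fun p : Nat.Primes => ((p : ℚ) ^ np p)⁻¹) : Set ℚ) := by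
    refine subset_antisymm (fun c hc => ?_) ?_
    · have hden (p : Nat.Primes) : c.den.factorization p ≤ np p := by
        have hcp := In_pi_subset_Inp (fun q => (hinf q).nonempty) p hc
        rw [hnp] at hcp
        exact Padic.factorization_den_le_of_norm_mul_pow_le_one hcp
      rw [← c.num_div_den, div_eq_mul_inv, ← zsmul_eq_mul]
      exact smul_mem _ _ (inv_natCast_mem_span_inv_pow np hden)
    · refine span_le (p := In.submodule _ n) |>.2 (range_subset_iff.2 fun p => ?_)
      refine inv_pow_mem_In_pi ?_
      have hp0 : (p : ℚ_[(p : ℕ)]) ^ np p ≠ 0 := pow_ne_zero _ (mod_cast p.2.ne_zero)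
      rw [hnp, Set.mem_ofPred_eq]
      push_cast
      rw [inv_mul_cancel₀ hp0, norm_one]
  refine ⟨hspan, ?_, fun h => ?_⟩
  · rw [hspan, span_eq]
    exact ⟨finite_of_fg_span_inv_pow np,
      fun h => span_inv_pow_eq_span_singleton np h ▸ fg_span_singleton _⟩
  · ext c
    rw [hspan, SetLike.mem_coe, span_inv_pow_eq_span_singleton np h, mem_span_singleton]
    simp [div_eq_mul_inv, eq_comm]

/-- Let `E = ∏_p E_p ⊆ Ẑ` be compact with each `E_p` infinite, and suppose
`I_n(E_p) = p^{-n_p} ℤ_(p)` for each `p`. Then `I_n(E) = Σ_p p^{-n_p} ℤ`; moreover `I_n(E)`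
is a fractional ideal of `ℤ` iff `n_p = 0` for all but finitely many `p`, in which case
`I_n(E) = (∏_p p^{n_p})⁻¹ ℤ`. -/
theorem In_pi_eq_span_of_local_data (Ep : ∀ p : Nat.Primes, Set ℤ_[(p : ℕ)])
    (hcpt : IsCompact (Set.univ.pi Ep)) (hinf : ∀ p, (Ep p).Infinite)
    (n : ℕ) (np : Nat.Primes → ℕ)
    (hnp : ∀ p : Nat.Primes,
      Inp p (Ep p) n = {c : ℚ | ‖(c : ℚ_[(p : ℕ)]) * (p : ℚ_[(p : ℕ)]) ^ (np p)‖ ≤ 1}) :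
    In (Set.univ.pi Ep) n
        = (Submodule.span ℤ (Set.range fun p : Nat.Primes => ((p : ℚ) ^ (np p))⁻¹) : Set ℚ)
      ∧ ((Submodule.span ℤ (In (Set.univ.pi Ep) n)).FG ↔ {p : Nat.Primes | np p ≠ 0}.Finite)
      ∧ ∀ h : {p : Nat.Primes | np p ≠ 0}.Finite,
          In (Set.univ.pi Ep) n
            = {c : ℚ | ∃ m : ℤ, c = m / ∏ p ∈ h.toFinset, (p : ℚ) ^ (np p)} :=
  In_pi_eq_span_of_local_data_general Ep hinf n np hnp
end

section
/- Let E_p ⊆ ℤ_p be infinite with a p-ordering (a_n)_{n≥0} (so v_p(∏_{k<n}(a_n − a_k)) = min_{x ∈ E_p} v_p(∏_{k<n}(x − a_k)) for all n ≥ 1, and the a_n are distinct). Then the polynomials f_0 = 1 and f_n(x) = ∏_{k=0}^{n−1} (x − a_k)/(a_n − a_k) for n ≥ 1 form a ℤ_p-module basis of Int(E_p, ℤ_p) = {f ∈ ℚ_p[x] : f(E_p) ⊆ ℤ_p}, with deg f_n = n. -/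
/-!
Since `deg f_n = n`, the `f_n` form a `ℚ_p`-basis of `ℚ_p[X]`. As `f_n` vanishes at
`a_0, …, a_{n-1}` and equals `1` at `a_n`, the coordinates `c_n` of `g` in this basis solve the
triangular system `g(a_m) = c_m + ∑_{n<m} c_n f_n(a_m)`. The `p`-ordering property says exactly
that `|f_n| ≤ 1` on `E_p`, so if `|g| ≤ 1` on `E_p`, the ultrametric inequality and induction on
`m` give `|c_m| ≤ 1`.
-/

open Polynomial

namespace Polynomial

section Field

variable {K : Type*} [Field K]

noncomputable def newtonPoly (b : ℕ → K) (n : ℕ) : K[X] :=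
  ∏ k ∈ Finset.range n, C ((b n - b k)⁻¹) * (X - C (b k))

variable {b : ℕ → K}

theorem eval_newtonPoly (n : ℕ) (x : K) :
    (newtonPoly b n).eval x =
      (∏ k ∈ Finset.range n, (x - b k)) / ∏ k ∈ Finset.range n, (b n - b k) := by
  simp only [newtonPoly, eval_prod, eval_mul, eval_C, eval_sub, eval_X, div_eq_mul_inv,
    ← Finset.prod_inv_distrib, ← Finset.prod_mul_distrib, mul_comm]

theorem eval_newtonPoly_of_lt {m n : ℕ} (h : m < n) : (newtonPoly b n).eval (b m) = 0 := by
  rw [eval_newtonPoly, Finset.prod_eq_zero (Finset.mem_range.mpr h) (sub_self _), zero_div]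

theorem eval_newtonPoly_self (hb : Function.Injective b) (n : ℕ) :
    (newtonPoly b n).eval (b n) = 1 := by
  rw [eval_newtonPoly, div_self]
  exact Finset.prod_ne_zero_iff.mpr fun k hk =>
    sub_ne_zero.mpr (hb.ne (Finset.mem_range.mp hk).ne')

theorem degree_newtonPoly (hb : Function.Injective b) (n : ℕ) : (newtonPoly b n).degree = n := by
  have hfactor : ∀ k ∈ Finset.range n, (C ((b n - b k)⁻¹) * (X - C (b k))).degree = 1 :=
    fun k hk => by
      rw [degree_C_mul (inv_ne_zero (sub_ne_zero.mpr (hb.ne (Finset.mem_range.mp hk).ne'))),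
        degree_X_sub_C]
  rw [newtonPoly, degree_prod, Finset.sum_congr rfl hfactor]
  simp

noncomputable def newtonBasis (hb : Function.Injective b) : Module.Basis ℕ K K[X] :=
  Sequence.basis ⟨newtonPoly b, degree_newtonPoly hb⟩ fun n =>
    isUnit_iff_ne_zero.mpr (leadingCoeff_ne_zero.mpr (Sequence.ne_zero _ n))

@[simp]
theorem newtonBasis_apply (hb : Function.Injective b) (n : ℕ) :
    newtonBasis hb n = newtonPoly b n :=
  Sequence.basis_eq_self _ _ _

theorem eval_eq_newtonBasis_repr_add (hb : Function.Injective b) (g : K[X]) (m : ℕ) :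
    g.eval (b m) = (newtonBasis hb).repr g m +
      ∑ n ∈ Finset.range m, (newtonBasis hb).repr g n * (newtonPoly b n).eval (b m) := by
  conv_lhs => rw [← (newtonBasis hb).linearCombination_repr g, Finsupp.linearCombination_apply,
    Finsupp.sum, eval_finsetSum]
  simp only [eval_smul, newtonBasis_apply, smul_eq_mul]
  -- pass from `c.support` to `range (m + 1)` through their union: off the support the
  -- coefficient vanishes, beyond `m` the value `(newtonPoly b n).eval (b m)` does
  rw [Finset.sum_subset (Finset.subset_union_left (s₂ := Finset.range (m + 1)))
      fun n _ hn => by rw [Finsupp.notMem_support_iff.mp hn, zero_mul],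
    ← Finset.sum_subset Finset.subset_union_right fun n _ hn => by
      rw [eval_newtonPoly_of_lt (by simpa using hn), mul_zero],
    Finset.sum_range_succ, eval_newtonPoly_self hb, mul_one, add_comm]

end Field

theorem norm_newtonBasis_repr_le_one {K : Type*} [NormedField K] [IsUltrametricDist K]
    {b : ℕ → K} (hb : Function.Injective b)
    (hf : ∀ m, ∀ n < m, ‖(newtonPoly b n).eval (b m)‖ ≤ 1)
    {g : K[X]} (hg : ∀ m, ‖g.eval (b m)‖ ≤ 1) (m : ℕ) : ‖(newtonBasis hb).repr g m‖ ≤ 1 := by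
  induction m using Nat.strong_induction_on with
  | _ m ih =>
    rw [eq_sub_of_add_eq (eval_eq_newtonBasis_repr_add hb g m).symm, sub_eq_add_neg]
    refine (IsUltrametricDist.norm_add_le_max _ _).trans (max_le (hg m) ?_)
    rw [norm_neg]
    refine IsUltrametricDist.norm_sum_le_of_forall_le_of_nonneg zero_le_one fun n hn => ?_
    rw [norm_mul]
    exact mul_le_one₀ (ih n (Finset.mem_range.mp hn)) (norm_nonneg _)
      (hf m n (Finset.mem_range.mp hn))

end Polynomial

namespace PadicInt

variable {p : ℕ} [Fact p.Prime]

theorem norm_eval_newtonPoly_le_one {a : ℕ → ℤ_[p]} {n : ℕ} {x : ℤ_[p]}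
    (h : ‖∏ k ∈ Finset.range n, (x - a k)‖ ≤ ‖∏ k ∈ Finset.range n, (a n - a k)‖) :
    ‖(newtonPoly (fun k => (a k : ℚ_[p])) n).eval (x : ℚ_[p])‖ ≤ 1 := by
  have hcoe (y : ℤ_[p]) :
      ‖∏ k ∈ Finset.range n, ((y : ℚ_[p]) - a k)‖ = ‖∏ k ∈ Finset.range n, (y - a k)‖ := by
    simp only [norm_prod, ← coe_sub, ← norm_def]
  rw [eval_newtonPoly, norm_div, hcoe, hcoe]
  exact div_le_one_of_le₀ h (norm_nonneg _)

theorem existsUnique_finsupp_of_norm_repr_le_one {ι V : Type*} [AddCommGroup V] [Module ℚ_[p] V]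
    (B : Module.Basis ι ℚ_[p] V) {v : V} (hv : ∀ i, ‖B.repr v i‖ ≤ 1) :
    ∃! c : ι →₀ ℤ_[p], v = c.sum fun i t => (t : ℚ_[p]) • B i := by
  have hsum (c : ι →₀ ℤ_[p]) : (c.sum fun i t => (t : ℚ_[p]) • B i) =
      Finsupp.linearCombination ℚ_[p] B (c.mapRange (fun t : ℤ_[p] => (t : ℚ_[p])) coe_zero) := by
    rw [Finsupp.linearCombination_apply,
      Finsupp.sum_mapRange_index fun i => zero_smul ℚ_[p] (B i)]
  have hcoeffs (c : ι →₀ ℤ_[p]) : (v = c.sum fun i t => (t : ℚ_[p]) • B i) ↔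
      c.mapRange (fun t : ℤ_[p] => (t : ℚ_[p])) coe_zero = B.repr v := by
    rw [hsum]
    constructor
    · rintro rfl
      exact (B.repr_linearCombination _).symm
    · intro h
      rw [h, B.linearCombination_repr]
  let c₀ : ι →₀ ℤ_[p] := Finsupp.onFinset (B.repr v).support (fun i => ⟨B.repr v i, hv i⟩)
    fun i hi => Finsupp.mem_support_iff.mpr fun h0 => hi (Subtype.ext h0)
  have hc₀ : c₀.mapRange (fun t : ℤ_[p] => (t : ℚ_[p])) coe_zero = B.repr v :=
    Finsupp.ext fun _ => rfl
  simp only [hcoeffs]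
  exact ⟨c₀, hc₀, fun c hc =>
    Finsupp.mapRange_injective _ coe_zero Subtype.coe_injective (hc.trans hc₀.symm)⟩

end PadicInt

theorem pOrdering_gives_basis_general (p : ℕ) [Fact p.Prime] (Ep : Set ℤ_[p])
    (a : ℕ → ℤ_[p]) (ha : ∀ n, a n ∈ Ep) (hinj : Function.Injective a)
    (hord : ∀ n : ℕ, 1 ≤ n → ∀ x ∈ Ep,
      ‖∏ k ∈ Finset.range n, ((x : ℤ_[p]) - a k)‖ ≤ ‖∏ k ∈ Finset.range n, (a n - a k)‖) :
    letI f : ℕ → Polynomial ℚ_[p] := fun n =>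
      ∏ k ∈ Finset.range n,
        Polynomial.C (((a n : ℚ_[p]) - (a k : ℚ_[p]))⁻¹) * (X - Polynomial.C ((a k : ℚ_[p])))
    (∀ n, (f n).degree = (n : ℕ)) ∧
      (∀ n, ∀ x ∈ Ep, ‖(f n).eval ((x : ℚ_[p]))‖ ≤ 1) ∧
      ∀ g : Polynomial ℚ_[p], (∀ x ∈ Ep, ‖g.eval ((x : ℚ_[p]))‖ ≤ 1) →
        ∃! c : ℕ →₀ ℤ_[p], g = c.sum fun n b => (b : ℚ_[p]) • f n := by
  have hb : Function.Injective fun n => (a n : ℚ_[p]) := Subtype.coe_injective.comp hinj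
  have hbounded :
      ∀ n, ∀ x ∈ Ep, ‖(newtonPoly (fun k => (a k : ℚ_[p])) n).eval (x : ℚ_[p])‖ ≤ 1 := by
    intro n x hx
    refine PadicInt.norm_eval_newtonPoly_le_one ?_
    rcases Nat.eq_zero_or_pos n with rfl | hn
    · simp
    · exact hord n hn x hx
  refine ⟨degree_newtonPoly hb, hbounded, fun g hg => ?_⟩
  have hcoeffs := PadicInt.existsUnique_finsupp_of_norm_repr_le_one (newtonBasis hb)
    (norm_newtonBasis_repr_le_one hb (fun m n _ => hbounded n _ (ha m)) fun m => hg _ (ha m))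
  simp only [newtonBasis_apply] at hcoeffs
  exact hcoeffs

/-- **Bhargava.** If `E_p ⊆ ℤ_p` is infinite and `(a_n)` is a `p`-ordering of
`E_p` (the minimum of `v_p(∏_{k<n}(x − a_k))` over `x ∈ E_p` is attained at `x = a_n`, i.e.
the norm is maximal there), then `f_0 = 1` and `f_n(x) = ∏_{k<n} (x − a_k)/(a_n − a_k)` form
a `ℤ_p`-module basis of `Int(E_p, ℤ_p) = {f ∈ ℚ_p[x] : f(E_p) ⊆ ℤ_p}`, with `deg f_n = n`. -/
theorem pOrdering_gives_basis (p : ℕ) [Fact p.Prime] (Ep : Set ℤ_[p]) (hinf : Ep.Infinite)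
    (a : ℕ → ℤ_[p]) (ha : ∀ n, a n ∈ Ep) (hinj : Function.Injective a)
    (hord : ∀ n : ℕ, 1 ≤ n → ∀ x ∈ Ep,
      ‖∏ k ∈ Finset.range n, ((x : ℤ_[p]) - a k)‖ ≤ ‖∏ k ∈ Finset.range n, (a n - a k)‖) :
    letI f : ℕ → Polynomial ℚ_[p] := fun n =>
      ∏ k ∈ Finset.range n,
        Polynomial.C (((a n : ℚ_[p]) - (a k : ℚ_[p]))⁻¹) * (X - Polynomial.C ((a k : ℚ_[p])))
    (∀ n, (f n).degree = (n : ℕ)) ∧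
      (∀ n, ∀ x ∈ Ep, ‖(f n).eval ((x : ℚ_[p]))‖ ≤ 1) ∧
      ∀ g : Polynomial ℚ_[p], (∀ x ∈ Ep, ‖g.eval ((x : ℚ_[p]))‖ ≤ 1) →
        ∃! c : ℕ →₀ ℤ_[p], g = c.sum fun n b => (b : ℚ_[p]) • f n :=
  pOrdering_gives_basis_general p Ep a ha hinj hord
end
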